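/- arXiv:1604.07884 — 2 statements merged into one kernel-verified Lean document; each statement's English description precedes it below -/
import Mathlib

section
/- Let X and Y be nonnegative, independent real-valued random variables on a probability space and let a > 0. Then E[ln(1 + X/(Y + a))] = ∫₀^∞ (e^{−a z}/z)·(1 − E[e^{−z X}])·E[e^{−z Y}] dz. -/
/-!
Frullani's integral `∫₀^∞ (e^{-bz} - e^{-cz}) / z dz = log (c / b)`, taken with `b = Y + a` and
`c = X + Y + a`, writes `log (1 + X / (Y + a))` as the `z`-integral of
`e^{-az} / z * (1 - e^{-zX}) * e^{-zY}`. This integrand is nonnegative, so Tonelli lets us take the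
expectation inside the `z`-integral, where independence factors it into
`(1 - E[e^{-zX}]) * E[e^{-zY}]`.
-/

open MeasureTheory ProbabilityTheory Real Set Filter Function Topology

section IteratedIntegral

variable {α β : Type*} [MeasurableSpace α] [MeasurableSpace β] {μ : Measure α} {ν : Measure β}

theorem integral_integral_eq_toReal_lintegral_lintegral [SFinite ν] {f : α → β → ℝ}
    (hf : AEStronglyMeasurable (uncurry f) (μ.prod ν))
    (hf_int : ∀ᵐ x ∂μ, Integrable (f x) ν) (hf_nonneg : ∀ᵐ x ∂μ, 0 ≤ᵐ[ν] f x) :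
    ∫ x, ∫ y, f x y ∂ν ∂μ = (∫⁻ x, ∫⁻ y, ENNReal.ofReal (f x y) ∂ν ∂μ).toReal := by
  rw [integral_eq_lintegral_of_nonneg_ae
    (hf_nonneg.mono fun x hx => integral_nonneg_of_ae hx) hf.integral_prod_right']
  congr 1
  refine lintegral_congr_ae ?_
  filter_upwards [hf_int, hf_nonneg] with x hx_int hx_nonneg
  exact ofReal_integral_eq_lintegral_ofReal hx_int hx_nonneg

/-- Both sides are `toReal` of the same double lower integral, also when it is infinite; without
slice integrability an inner integral could take the junk value `0`. -/
theorem integral_integral_swap_of_nonneg [SFinite μ] [SFinite ν] {f : α → β → ℝ}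
    (hf : AEStronglyMeasurable (uncurry f) (μ.prod ν))
    (hfx_int : ∀ᵐ x ∂μ, Integrable (f x) ν) (hfx_nonneg : ∀ᵐ x ∂μ, 0 ≤ᵐ[ν] f x)
    (hfy_int : ∀ᵐ y ∂ν, Integrable (fun x => f x y) μ)
    (hfy_nonneg : ∀ᵐ y ∂ν, 0 ≤ᵐ[μ] fun x => f x y) :
    ∫ x, ∫ y, f x y ∂ν ∂μ = ∫ y, ∫ x, f x y ∂μ ∂ν := by
  rw [integral_integral_eq_toReal_lintegral_lintegral hf hfx_int hfx_nonneg,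
    integral_integral_eq_toReal_lintegral_lintegral (f := fun y x => f x y) hf.prod_swap
      hfy_int hfy_nonneg,
    lintegral_lintegral_swap (f := fun x y => ENNReal.ofReal (f x y))
      (ENNReal.measurable_ofReal.comp_aemeasurable hf.aemeasurable)]

end IteratedIntegral

theorem integrableOn_Ioi_inv_mul_exp_sub_exp {b c : ℝ} (hb : 0 < b) (hbc : b ≤ c) :
    IntegrableOn (fun z => z⁻¹ * (exp (-(b * z)) - exp (-(c * z)))) (Ioi 0) := by
  refine ((exp_neg_integrableOn_Ioi 0 hb).const_mul (c - b)).mono' (by fun_prop) ?_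
  filter_upwards [ae_restrict_mem measurableSet_Ioi] with z (hz : 0 < z)
  -- `e^{-cz} = e^{-bz} e^{-(c-b)z} ≥ e^{-bz} (1 - (c-b)z)` bounds the integrand by `(c-b) e^{-bz}`
  have hexp : exp (-(c * z)) = exp (-(b * z)) * exp (-((c - b) * z)) := by
    rw [← exp_add]; ring_nf
  have h_lower := add_one_le_exp (-((c - b) * z))
  have h_upper : exp (-((c - b) * z)) ≤ 1 := exp_le_one_iff.mpr (by nlinarith)
  have hpos := exp_pos (-(b * z))
  rw [norm_of_nonneg (mul_nonneg (inv_nonneg.mpr hz.le) (by nlinarith)), hexp,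
    inv_mul_le_iff₀ hz, neg_mul]
  nlinarith

theorem integral_Ioi_inv_mul_exp_sub_exp {b c : ℝ} (hb : 0 < b) (hbc : b ≤ c) :
    ∫ z in Ioi 0, z⁻¹ * (exp (-(b * z)) - exp (-(c * z))) = log (c / b) := by
  have hcont : Continuous fun t : ℝ => exp (-t) := by fun_prop
  have hzero : Tendsto (fun t : ℝ => exp (-t)) (𝓝[>] 0) (𝓝 1) := by
    simpa using (hcont.tendsto 0).mono_left nhdsWithin_le_nhds
  simpa using Frullani.integral_Ioi_eq (hcont.locallyIntegrable.locallyIntegrableOn _) hb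
    (hb.trans_le hbc) hzero tendsto_exp_neg_atTop_nhds_zero
    (integrableOn_Ioi_inv_mul_exp_sub_exp hb hbc)

noncomputable def rateKernel (a x y z : ℝ) : ℝ :=
  exp (-a * z) / z * (1 - exp (-z * x)) * exp (-z * y)

theorem rateKernel_eq (a x y z : ℝ) :
    rateKernel a x y z = z⁻¹ * (exp (-((y + a) * z)) - exp (-((x + y + a) * z))) := by
  rw [rateKernel, show -((y + a) * z) = -a * z + -z * y by ring,
    show -((x + y + a) * z) = -a * z + -z * x + -z * y by ring, exp_add, exp_add, exp_add]
  ring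

theorem rateKernel_nonneg (a y : ℝ) {x z : ℝ} (hx : 0 ≤ x) (hz : 0 ≤ z) :
    0 ≤ rateKernel a x y z := by
  have : exp (-z * x) ≤ 1 := exp_le_one_iff.mpr (by nlinarith)
  exact mul_nonneg (mul_nonneg (by positivity) (by linarith)) (exp_pos _).le

theorem rateKernel_le (a : ℝ) {x y z : ℝ} (hx : 0 ≤ x) (hy : 0 ≤ y) (hz : 0 ≤ z) :
    rateKernel a x y z ≤ exp (-a * z) / z := by
  have hx' : 0 < exp (-z * x) := exp_pos _
  have hy' : exp (-z * y) ≤ 1 := exp_le_one_iff.mpr (by nlinarith)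
  have h₀ : 0 ≤ exp (-a * z) / z := by positivity
  calc rateKernel a x y z ≤ exp (-a * z) / z * (1 - exp (-z * x)) :=
        mul_le_of_le_one_right (mul_nonneg h₀ (sub_nonneg.mpr (exp_le_one_iff.mpr (by nlinarith))))
          hy'
    _ ≤ exp (-a * z) / z := mul_le_of_le_one_right h₀ (by linarith)

theorem integrableOn_rateKernel {a x y : ℝ} (hya : 0 < y + a) (hx : 0 ≤ x) :
    IntegrableOn (rateKernel a x y) (Ioi 0) := by
  exact (integrableOn_Ioi_inv_mul_exp_sub_exp hya (by linarith)).congr_fun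
    (fun z _ => (rateKernel_eq a x y z).symm) measurableSet_Ioi

theorem integral_rateKernel {a x y : ℝ} (hya : 0 < y + a) (hx : 0 ≤ x) :
    ∫ z in Ioi 0, rateKernel a x y z = log (1 + x / (y + a)) := by
  simp only [rateKernel_eq]
  rw [integral_Ioi_inv_mul_exp_sub_exp hya (by linarith), add_div' _ _ _ hya.ne', one_mul]
  ring_nf

theorem integrable_rateKernel_comp {Ω : Type*} [MeasurableSpace Ω] {μ : Measure Ω}
    [IsFiniteMeasure μ] {X Y : Ω → ℝ} (hXm : Measurable X) (hYm : Measurable Y)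
    (hX : ∀ ω, 0 ≤ X ω) (hY : ∀ ω, 0 ≤ Y ω) (a : ℝ) {z : ℝ} (hz : 0 ≤ z) :
    Integrable (fun ω => rateKernel a (X ω) (Y ω) z) μ := by
  refine .of_bound (by unfold rateKernel; fun_prop) (exp (-a * z) / z) (ae_of_all _ fun ω => ?_)
  rw [norm_of_nonneg (rateKernel_nonneg a _ (hX ω) hz)]
  exact rateKernel_le a (hX ω) (hY ω) hz

theorem integral_rateKernel_comp_of_indepFun {Ω : Type*} [MeasurableSpace Ω] {μ : Measure Ω}
    [IsProbabilityMeasure μ] {X Y : Ω → ℝ} (hXm : Measurable X) (hYm : Measurable Y)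
    (hX : ∀ ω, 0 ≤ X ω) (hXY : IndepFun X Y μ) (a : ℝ) {z : ℝ} (hz : 0 ≤ z) :
    ∫ ω, rateKernel a (X ω) (Y ω) z ∂μ =
      exp (-a * z) / z * (1 - ∫ ω, exp (-z * X ω) ∂μ) * ∫ ω, exp (-z * Y ω) ∂μ := by
  have hexpX : Integrable (fun ω => exp (-z * X ω)) μ := by
    refine .of_bound (by fun_prop) 1 (ae_of_all _ fun ω => ?_)
    rw [norm_of_nonneg (exp_pos _).le, exp_le_one_iff]
    nlinarith [hX ω]
  have hfactor := hXY.integral_comp_mul_comp hXm.aemeasurable hYm.aemeasurable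
    (f := fun x => 1 - exp (-z * x)) (g := fun y => exp (-z * y)) (by fun_prop) (by fun_prop)
  simp only [Pi.mul_apply, comp_apply] at hfactor
  simp only [rateKernel, mul_assoc, integral_const_mul, hfactor,
    integral_sub (integrable_const 1) hexpX, integral_const, probReal_univ, one_smul]

/-- For nonnegative independent real random variables `X, Y` and `a > 0`,
`E[ln(1 + X/(Y + a))] = ∫₀^∞ (e^{−a z}/z)·(1 − E[e^{−z X}])·E[e^{−z Y}] dz`. -/
theorem stmt_1 {Ω : Type*} [MeasureSpace Ω] [IsProbabilityMeasure (ℙ : Measure Ω)]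
    (X Y : Ω → ℝ) (hXm : Measurable X) (hYm : Measurable Y)
    (hX : ∀ ω, 0 ≤ X ω) (hY : ∀ ω, 0 ≤ Y ω)
    (hindep : IndepFun X Y) (a : ℝ) (ha : 0 < a) :
    (∫ ω, Real.log (1 + X ω / (Y ω + a))) =
      ∫ z in Set.Ioi (0 : ℝ),
        (Real.exp (-a * z) / z) * (1 - ∫ ω, Real.exp (-z * X ω)) *
          (∫ ω, Real.exp (-z * Y ω)) := by
  have hYa : ∀ ω, 0 < Y ω + a := fun ω => by linarith [hY ω]
  have hmeas : Measurable (uncurry fun ω z => rateKernel a (X ω) (Y ω) z) := by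
    unfold rateKernel; fun_prop
  calc ∫ ω, log (1 + X ω / (Y ω + a))
      = ∫ ω, ∫ z in Ioi 0, rateKernel a (X ω) (Y ω) z :=
        integral_congr_ae (ae_of_all _ fun ω => (integral_rateKernel (hYa ω) (hX ω)).symm)
    _ = ∫ z in Ioi 0, ∫ ω, rateKernel a (X ω) (Y ω) z :=
        integral_integral_swap_of_nonneg hmeas.aestronglyMeasurable
          (ae_of_all _ fun ω => integrableOn_rateKernel (hYa ω) (hX ω))
          (ae_of_all _ fun ω => ae_restrict_of_forall_mem measurableSet_Ioi fun z hz =>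
            rateKernel_nonneg a _ (hX ω) hz.le)
          (ae_restrict_of_forall_mem measurableSet_Ioi fun z hz =>
            integrable_rateKernel_comp hXm hYm hX hY a hz.le)
          (ae_restrict_of_forall_mem measurableSet_Ioi fun z hz =>
            ae_of_all _ fun ω => rateKernel_nonneg a _ (hX ω) hz.le)
    _ = _ := setIntegral_congr_fun measurableSet_Ioi fun z hz =>
        integral_rateKernel_comp_of_indepFun hXm hYm hX hindep a hz.le
end

section
/- Let n ≥ 1, let c : Fin n → Fin n → ℝ satisfy c i j > 0 for all i, j, and suppose there is A > 0 with Σ_j c i j = A for every i. Let λ, ε, C, L > 0 satisfy λ·ε² < C/(L·ln 2·A), and set τ = (C/(L·ln 2·A) − λ·ε²)^{−1}. Let x : ℝ → (Fin n → ℝ) be continuous on [0, ∞) with x(t) i ≥ 0 for all i and all t ≥ 0, such that: for every t ≥ 0 at which max_k x(t) k > 0, each coordinate function t ↦ x(t) i is differentiable at t with derivative λ·ε² − C·x(t) i/(L·ln 2·Σ_k x(t) k · c i k), and for every t at which max_k x(t) k = 0 each coordinate has derivative 0. Then x(t) i = 0 for all i and all t ≥ τ · max_k x(0) k. -/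
open Finset

/-- Fluid-limit stability: under the subcritical condition
`λ·ε² < C/(L·ln 2·A)` (with equal row sums `Σ_j c i j = A`), every
nonnegative continuous fluid trajectory satisfying the fluid ODE reaches
zero by time `τ·‖x(0)‖_∞` and stays there. -/
theorem stmt_11 (n : ℕ) (hn : 1 ≤ n) (c : Fin n → Fin n → ℝ)
    (hc : ∀ i j, 0 < c i j) (A : ℝ) (hA : 0 < A) (hrow : ∀ i, ∑ j, c i j = A)
    (lam ε C L : ℝ) (hlam : 0 < lam) (hε : 0 < ε) (hC : 0 < C) (hL : 0 < L)
    (hsub : lam * ε ^ 2 < C / (L * Real.log 2 * A))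
    (τ : ℝ) (hτ : τ = (C / (L * Real.log 2 * A) - lam * ε ^ 2)⁻¹)
    (x : ℝ → Fin n → ℝ) (hcont : ContinuousOn x (Set.Ici 0))
    (hnonneg : ∀ t, 0 ≤ t → ∀ i, 0 ≤ x t i)
    (hpos : ∀ t, 0 ≤ t → 0 < (⨆ k, x t k) → ∀ i,
      HasDerivAt (fun u => x u i)
        (lam * ε ^ 2 - C * x t i / (L * Real.log 2 * ∑ k, x t k * c i k)) t)
    (hzero : ∀ t, 0 ≤ t → (⨆ k, x t k) = 0 → ∀ i,
      HasDerivAt (fun u => x u i) 0 t) :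
    ∀ i, ∀ t, τ * (⨆ k, x 0 k) ≤ t → x t i = 0 := by
  have hn' : 0 < n := hn
  haveI : Nonempty (Fin n) := Fin.pos_iff_nonempty.mp hn'
  have hlog2 : 0 < Real.log 2 := Real.log_pos (by norm_num)
  have hLL0 : 0 < L * Real.log 2 := mul_pos hL hlog2
  set LL := L * Real.log 2 with hLLdef
  set δ := C / (LL * A) - lam * ε ^ 2 with hδdef
  have hδ : 0 < δ := sub_pos.mpr hsub
  set h : ℝ → ℝ := fun t => ⨆ k, x t k with hhdef
  have hsup' : ∀ t, h t = Finset.univ.sup' Finset.univ_nonempty (x t) := fun t =>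
    (Finset.sup'_univ_eq_ciSup (x t)).symm
  have hxle : ∀ t, ∀ i, x t i ≤ h t := fun t i =>
    le_ciSup (Set.Finite.bddAbove (Set.finite_range (x t))) i
  have hhnn : ∀ t, 0 ≤ t → 0 ≤ h t := by
    intro t ht
    exact le_trans (hnonneg t ht (Classical.arbitrary (Fin n))) (hxle t _)
  have hconti : ∀ i : Fin n, ContinuousOn (fun t => x t i) (Set.Ici 0) :=
    fun i => (continuous_apply i).comp_continuousOn hcont
  have hconth : ContinuousOn h (Set.Ici 0) := by
    have heq : h = fun t => Finset.univ.sup' Finset.univ_nonempty (fun i => x t i) :=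
      funext hsup'
    rw [heq]
    exact ContinuousOn.finset_sup'_apply Finset.univ_nonempty (fun i _ => hconti i)
  -- derivative bound at maximizing coordinates
  have hderiv_le : ∀ t, 0 ≤ t → 0 < h t → ∀ i, x t i = h t →
      lam * ε ^ 2 - C * x t i / (LL * ∑ k, x t k * c i k) ≤ -δ := by
    intro t ht htpos i hi
    have hsum_le : ∑ k, x t k * c i k ≤ h t * A := by
      rw [← hrow i, Finset.mul_sum]
      exact Finset.sum_le_sum fun k _ => mul_le_mul_of_nonneg_right (hxle t k) (hc i k).le
    have hsum_pos : 0 < ∑ k, x t k * c i k := by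
      apply Finset.sum_pos' (fun k _ => mul_nonneg (hnonneg t ht k) (hc i k).le)
      exact ⟨i, Finset.mem_univ i, by rw [hi]; exact mul_pos htpos (hc i i)⟩
    have key : C / (LL * A) ≤ C * x t i / (LL * ∑ k, x t k * c i k) := by
      rw [hi, div_le_div_iff₀ (by positivity) (by positivity)]
      nlinarith [mul_le_mul_of_nonneg_left hsum_le (mul_pos hC hLL0).le]
    have : -δ = lam * ε ^ 2 - C / (LL * A) := by rw [hδdef]; ring
    linarith
  -- slope bound for h at points where h is positive
  have hslope : ∀ t, 0 ≤ t → 0 < h t → ∀ r : ℝ, -δ < r →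
      ∃ᶠ z in nhdsWithin t (Set.Ioi t), slope h t z < r := by
    intro t ht htpos r hr
    have hev : ∀ j : Fin n, ∀ᶠ z in nhdsWithin t (Set.Ioi t),
        x z j < h t + r * (z - t) := by
      intro j
      have hd := hpos t ht htpos j
      by_cases hj : x t j = h t
      · have hdle : lam * ε ^ 2 - C * x t j / (LL * ∑ k, x t k * c j k) ≤ -δ :=
          hderiv_le t ht htpos j hj
        have hts := hasDerivAt_iff_tendsto_slope.mp hd
        have hlt : ∀ᶠ z in nhdsWithin t {t}ᶜ, slope (fun u => x u j) t z < r :=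
          hts (Iio_mem_nhds (lt_of_le_of_lt hdle hr))
        have hle : nhdsWithin t (Set.Ioi t) ≤ nhdsWithin t {t}ᶜ :=
          nhdsWithin_mono t (fun z hz => ne_of_gt hz)
        filter_upwards [hlt.filter_mono hle, eventually_mem_nhdsWithin] with z hz hz'
        have hzt : (0:ℝ) < z - t := sub_pos.mpr hz'
        rw [slope_def_field, div_lt_iff₀ hzt] at hz
        have hxz : x z j - x t j < r * (z - t) := hz
        rw [hj] at hxz
        linarith
      · have hjlt : x t j < h t := lt_of_le_of_ne (hxle t j) hj
        have hct : ContinuousAt (fun u => x u j) t := hd.continuousAt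
        have hgt : ContinuousAt (fun z : ℝ => h t + r * (z - t)) t := by fun_prop
        have hev' : ∀ᶠ z in nhds t, x z j < h t + r * (z - t) := by
          apply hct.eventually_lt hgt
          simpa using hjlt
        exact hev'.filter_mono nhdsWithin_le_nhds
    have hevall : ∀ᶠ z in nhdsWithin t (Set.Ioi t),
        ∀ j : Fin n, x z j < h t + r * (z - t) := Filter.eventually_all.mpr hev
    have hfin : ∀ᶠ z in nhdsWithin t (Set.Ioi t), slope h t z < r := by
      filter_upwards [hevall, eventually_mem_nhdsWithin] with z hz hz'
      have hzt : (0:ℝ) < z - t := sub_pos.mpr hz'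
      have hzb : h z < h t + r * (z - t) := by
        rw [hsup' z]
        exact (Finset.sup'_lt_iff Finset.univ_nonempty).mpr fun j _ => hz j
      rw [slope_def_field, div_lt_iff₀ hzt]
      linarith
    exact hfin.frequently
  -- Claim 1: decay while positive
  have claim1 : ∀ a b : ℝ, 0 ≤ a → a ≤ b → (∀ s ∈ Set.Icc a b, 0 < h s) →
      h b ≤ h a - δ * (b - a) := by
    intro a b ha hab hposint
    have hIcc : Set.Icc a b ⊆ Set.Ici 0 := fun s hs => le_trans ha hs.1
    have hBd : ∀ t ∈ Set.Ico a b,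
        HasDerivWithinAt (fun u : ℝ => h a - δ * (u - a)) (-δ) (Set.Ici t) t := by
      intro t _
      have : HasDerivAt (fun u : ℝ => h a - δ * (u - a)) (-(δ * 1)) t :=
        (((hasDerivAt_id t).sub_const a).const_mul δ).const_sub (h a)
      simpa using this.hasDerivWithinAt
    have key := image_le_of_liminf_slope_right_le_deriv_boundary
      (f := h) (a := a) (b := b) (B := fun u => h a - δ * (u - a)) (B' := fun _ => -δ)
      (hconth.mono hIcc) (by simp) (by fun_prop) hBd
      (fun t htm r hr => hslope t (le_trans ha htm.1)
        (hposint t (Set.Ico_subset_Icc_self htm)) r hr)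
    have := key (Set.right_mem_Icc.mpr hab)
    simpa using this
  -- Claim 2: zero is absorbing
  have claim2 : ∀ a, 0 ≤ a → h a = 0 → ∀ t, a ≤ t → h t = 0 := by
    intro a ha ha0
    by_contra hcon
    push_neg at hcon
    obtain ⟨t1, hat1, ht1⟩ := hcon
    have ht10 : 0 ≤ t1 := le_trans ha hat1
    have ht1pos : 0 < h t1 := lt_of_le_of_ne (hhnn t1 ht10) (Ne.symm ht1)
    have hScl : IsClosed (Set.Icc a t1 ∩ h ⁻¹' {0}) :=
      (hconth.mono (fun s hs => le_trans ha hs.1)).preimage_isClosed_of_isClosed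
        isClosed_Icc isClosed_singleton
    have hSne : (Set.Icc a t1 ∩ h ⁻¹' {0}).Nonempty :=
      ⟨a, ⟨⟨le_rfl, hat1⟩, ha0⟩⟩
    have hSbdd : BddAbove (Set.Icc a t1 ∩ h ⁻¹' {0}) :=
      ⟨t1, fun s hs => hs.1.2⟩
    set s0 := sSup (Set.Icc a t1 ∩ h ⁻¹' {0}) with hs0def
    have hs0mem : s0 ∈ Set.Icc a t1 ∩ h ⁻¹' {0} := hScl.csSup_mem hSne hSbdd
    have hs00 : h s0 = 0 := hs0mem.2
    have hs0a : a ≤ s0 := hs0mem.1.1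
    have hs0t1 : s0 < t1 := by
      rcases lt_or_eq_of_le hs0mem.1.2 with h' | h'
      · exact h'
      · exfalso; rw [h'] at hs00; exact ht1 hs00
    have hs0nn : 0 ≤ s0 := le_trans ha hs0a
    -- h is positive on (s0, t1]
    have hposafter : ∀ u, s0 < u → u ≤ t1 → 0 < h u := by
      intro u hu hut1
      rcases lt_or_eq_of_le (hhnn u (le_trans hs0nn hu.le)) with h' | h'
      · exact h'
      · exfalso
        have : u ∈ Set.Icc a t1 ∩ h ⁻¹' {0} :=
          ⟨⟨le_trans hs0a hu.le, hut1⟩, h'.symm⟩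
        exact absurd (le_csSup hSbdd this) (not_le.mpr hu)
    -- pick s' slightly after s0 with h s' small
    have htend : Filter.Tendsto h (nhdsWithin s0 (Set.Ioi s0)) (nhds 0) := by
      have htd := (hconth s0 hs0nn).tendsto
      rw [hs00] at htd
      exact htd.mono_left (nhdsWithin_mono s0 (fun z hz => le_trans hs0nn (le_of_lt hz)))
    have hsmall : ∀ᶠ z in nhdsWithin s0 (Set.Ioi s0), h z < δ * (t1 - s0) / 2 := by
      apply htend.eventually_lt tendsto_const_nhds
      have h1 : 0 < t1 - s0 := sub_pos.mpr hs0t1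
      exact div_pos (mul_pos hδ h1) two_pos
    have hnear : ∀ᶠ z in nhdsWithin s0 (Set.Ioi s0),
        z ∈ Set.Ioo s0 (s0 + (t1 - s0) / 2) := by
      apply Ioo_mem_nhdsGT_of_mem
      constructor
      · exact le_rfl
      · linarith
    obtain ⟨s', hs'1, hs'2⟩ := (hsmall.and hnear).exists
    have hs's0 : s0 < s' := hs'2.1
    have hs't1 : s' < t1 := by
      have := hs'2.2
      linarith
    have hposI : ∀ s ∈ Set.Icc s' t1, 0 < h s := fun s hs =>
      hposafter s (lt_of_lt_of_le hs's0 hs.1) hs.2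
    have hdecay := claim1 s' t1 (le_trans hs0nn hs's0.le) hs't1.le hposI
    have hgap : δ * (t1 - s0) / 2 < δ * (t1 - s') := by
      have h22 := hs'2.2
      nlinarith
    clear_value LL δ h s0
    linarith [hdecay, hs'1, hgap, ht1pos]
  -- Final assembly
  have hhmain : ∀ t, τ * h 0 ≤ t → h t = 0 := by
    intro t hti
    have hτpos : 0 < τ := by rw [hτ]; exact inv_pos.mpr hδ
    have hδτ : δ * τ = 1 := by
      rw [hτ]
      exact mul_inv_cancel₀ (ne_of_gt hδ)
    rcases lt_or_eq_of_le (hhnn 0 le_rfl) with h00 | h00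
    · -- h 0 > 0
      set T0 := τ * h 0 with hT0
      have hT0pos : 0 < T0 := mul_pos hτpos h00
      by_cases hex : ∃ s ∈ Set.Icc 0 T0, h s = 0
      · obtain ⟨s, hs, hs0⟩ := hex
        exact claim2 s hs.1 hs0 t (le_trans hs.2 hti)
      · push_neg at hex
        exfalso
        have hposI : ∀ s ∈ Set.Icc 0 T0, 0 < h s := fun s hs =>
          lt_of_le_of_ne (hhnn s hs.1) (Ne.symm (hex s hs))
        have := claim1 0 T0 le_rfl hT0pos.le hposI
        have hzero' : h 0 - δ * (T0 - 0) = 0 := by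
          rw [hT0]
          have : δ * (τ * h 0) = (δ * τ) * h 0 := by ring
          rw [sub_zero, this, hδτ]; ring
        have hTpos : 0 < h T0 := hposI T0 ⟨hT0pos.le, le_rfl⟩
        linarith
    · -- h 0 = 0
      have ht0 : 0 ≤ t := by
        have : τ * h 0 = 0 := by rw [← h00]; ring
        linarith [hti, this]
      exact claim2 0 le_rfl h00.symm t ht0
  intro i t hti
  have hht : h t = 0 := hhmain t hti
  have ht0 : 0 ≤ t := by
    have hτpos : 0 < τ := by rw [hτ]; exact inv_pos.mpr hδ
    have : 0 ≤ τ * h 0 := mul_nonneg hτpos.le (hhnn 0 le_rfl)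
    linarith
  exact le_antisymm (hht ▸ hxle t i) (hnonneg t ht0 i)
end
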